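/- arXiv:math/0201285 — 2 statements merged into one kernel-verified Lean document; each statement's English description precedes it below -/
import Mathlib

section
/- Let (R_i), i = 1,…,n, be a profile on a finite set X such that every R_i is transitive. Let S ⊆ X, let 1/2 < α ≤ 1, and let x, y ∈ S be such that x R_i y for all i. If y is tr_S(B_α)-optimal then x is tr_S(B_α)-optimal; if y is tr_S(R_α)-optimal then x is tr_S(R_α)-optimal; and if y is tr_S(E_α)-optimal then x is tr_S(E_α)-optimal. -/
namespace SC

variable {X : Type*}

/-- `r_{ab}`: the number of individuals `i` with `a R_i b`. -/
noncomputable def rr {n : ℕ} (R : Fin n → X → X → Prop) (a b : X) : ℕ :=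
  Nat.card {i : Fin n // R i a b}

/-- `p_{ab}`: the number of individuals `i` with `a P_i b` (strict preference). -/
noncomputable def pp {n : ℕ} (R : Fin n → X → X → Prop) (a b : X) : ℕ :=
  Nat.card {i : Fin n // R i a b ∧ ¬ R i b a}

/-- `e_{ab}`: the number of individuals `i` with `a E_i b` (equivalence). -/
noncomputable def ee {n : ℕ} (R : Fin n → X → X → Prop) (a b : X) : ℕ :=
  Nat.card {i : Fin n // R i a b ∧ R i b a}

/-- `u_{ab}`: the number of individuals `i` undecided about `a, b`. -/
noncomputable def uu {n : ℕ} (R : Fin n → X → X → Prop) (a b : X) : ℕ :=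
  Nat.card {i : Fin n // ¬ R i a b ∧ ¬ R i b a}

/-- `d_{ab} = p_{ab} + p_{ba} + e_{ab}`. -/
noncomputable def dd {n : ℕ} (R : Fin n → X → X → Prop) (a b : X) : ℕ :=
  pp R a b + pp R b a + ee R a b

/-- `d_S`: the number of individuals with some strict preference within `S`. -/
noncomputable def dS {n : ℕ} (R : Fin n → X → X → Prop) (S : Set X) : ℕ :=
  Nat.card {i : Fin n // ∃ a ∈ S, ∃ b ∈ S, R i a b ∧ ¬ R i b a}

/-- `x M_α y  :⟺  p_{xy} ≥ α n`. -/
def Mrel {n : ℕ} (R : Fin n → X → X → Prop) (α : ℝ) (a b : X) : Prop :=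
  (pp R a b : ℝ) ≥ α * (n : ℝ)

/-- `x N_α y  :⟺  r_{xy} ≥ α n`. -/
def Nrel {n : ℕ} (R : Fin n → X → X → Prop) (α : ℝ) (a b : X) : Prop :=
  (rr R a b : ℝ) ≥ α * (n : ℝ)

/-- `x M^S_α y  :⟺  p_{xy} ≥ α d_S > 0`. -/
def MSrel {n : ℕ} (R : Fin n → X → X → Prop) (α : ℝ) (S : Set X) (a b : X) : Prop :=
  (pp R a b : ℝ) ≥ α * (dS R S : ℝ) ∧ 0 < α * (dS R S : ℝ)

/-- `x N^S_α y  :⟺  r_{xy} ≥ α d_S > 0`. -/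
def NSrel {n : ℕ} (R : Fin n → X → X → Prop) (α : ℝ) (S : Set X) (a b : X) : Prop :=
  (rr R a b : ℝ) ≥ α * (dS R S : ℝ) ∧ 0 < α * (dS R S : ℝ)

/-- `x B_α y  :⟺  p_{xy} ≥ α d_{xy} > 0`. -/
def Brel {n : ℕ} (R : Fin n → X → X → Prop) (α : ℝ) (a b : X) : Prop :=
  (pp R a b : ℝ) ≥ α * (dd R a b : ℝ) ∧ 0 < α * (dd R a b : ℝ)

/-- `x D_α y  :⟺  r_{xy} ≥ α d_{xy} > 0`. -/
def Drel {n : ℕ} (R : Fin n → X → X → Prop) (α : ℝ) (a b : X) : Prop :=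
  (rr R a b : ℝ) ≥ α * (dd R a b : ℝ) ∧ 0 < α * (dd R a b : ℝ)

/-- `x P_α y  :⟺  p_{xy} ≥ α (p_{xy} + p_{yx}) > 0`. -/
def Prel {n : ℕ} (R : Fin n → X → X → Prop) (α : ℝ) (a b : X) : Prop :=
  (pp R a b : ℝ) ≥ α * ((pp R a b : ℝ) + (pp R b a : ℝ)) ∧
    0 < α * ((pp R a b : ℝ) + (pp R b a : ℝ))

/-- `x R_α y  :⟺  r_{xy} ≥ α (r_{xy} + r_{yx})` and `p_{xy} > 0`. -/
def Rrel {n : ℕ} (R : Fin n → X → X → Prop) (α : ℝ) (a b : X) : Prop :=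
  (rr R a b : ℝ) ≥ α * ((rr R a b : ℝ) + (rr R b a : ℝ)) ∧ 0 < pp R a b

/-- `x U_α y  :⟺  p_{xy} > p_{yx}` and `p_{xy} + u_{xy} ≥ α n`. -/
def Urel {n : ℕ} (R : Fin n → X → X → Prop) (α : ℝ) (a b : X) : Prop :=
  pp R b a < pp R a b ∧ ((pp R a b : ℝ) + (uu R a b : ℝ)) ≥ α * (n : ℝ)

/-- `x E_α y  :⟺  p_{xy} > p_{yx}` and `p_{xy} + e_{xy} ≥ α d_{xy}`. -/
def Erel {n : ℕ} (R : Fin n → X → X → Prop) (α : ℝ) (a b : X) : Prop :=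
  pp R b a < pp R a b ∧ ((pp R a b : ℝ) + (ee R a b : ℝ)) ≥ α * (dd R a b : ℝ)

/-- `tr_S(A)`: the reflexive-transitive hull of the restriction of `A` to `S`. -/
def trS (S : Set X) (A : X → X → Prop) : X → X → Prop :=
  Relation.ReflTransGen (fun a b => a ∈ S ∧ b ∈ S ∧ A a b)

/-- `x` is `tr_S(A)`-optimal. -/
def optimalIn (S : Set X) (A : X → X → Prop) (x : X) : Prop :=
  ∀ y ∈ S, trS S A y x → trS S A x y

end SC


open SC

section Aux

variable {X : Type*} {n : ℕ}

private lemma card_mono {P Q : Fin n → Prop} (h : ∀ i, P i → Q i) :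
    Nat.card {i : Fin n // P i} ≤ Nat.card {i : Fin n // Q i} := by
  classical
  simp only [Nat.card_eq_fintype_card]
  exact Fintype.card_subtype_mono P Q h

private lemma rr_eq (R : Fin n → X → X → Prop) (a b : X) :
    rr R a b = pp R a b + ee R a b := by
  classical
  unfold rr pp ee
  simp only [Nat.card_eq_fintype_card, Fintype.card_subtype]
  have h := Finset.card_filter_add_card_filter_not
    (s := Finset.univ.filter (fun i => R i a b)) (p := fun i => R i b a)
  simp only [Finset.filter_filter] at h
  omega

private lemma ee_comm (R : Fin n → X → X → Prop) (a b : X) :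
    ee R a b = ee R b a :=
  Nat.card_congr (Equiv.subtypeEquivRight fun _ => and_comm)

private lemma dd_eq1 (R : Fin n → X → X → Prop) (a b : X) :
    dd R a b = rr R a b + pp R b a := by
  have h1 := rr_eq R a b
  unfold dd; omega

private lemma dd_eq2 (R : Fin n → X → X → Prop) (a b : X) :
    dd R a b = rr R b a + pp R a b := by
  have h1 := rr_eq R b a
  have h2 := ee_comm R a b
  unfold dd; omega

/-- The generic numeric step: `α(a+b) ≤ a`, `a ≤ a'`, `b' ≤ b` imply `α(a'+b') ≤ a'`. -/
private lemma num {α a a' b b' : ℝ} (hα0 : 0 < α) (hα1 : α ≤ 1)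
    (h : α * (a + b) ≤ a) (ha : a ≤ a') (hb : b' ≤ b) : α * (a' + b') ≤ a' := by
  nlinarith [mul_nonneg (by linarith : (0:ℝ) ≤ 1 - α) (by linarith : (0:ℝ) ≤ a' - a),
    mul_nonneg hα0.le (by linarith : (0:ℝ) ≤ b - b')]

section Mono

variable {R : Fin n → X → X → Prop} (htrans : ∀ i, Transitive (R i))
  {x y : X} (hxy : ∀ i, R i x y)

include htrans hxy

private lemma m1 (z : X) : pp R z x ≤ pp R z y :=
  card_mono fun i h => ⟨htrans i h.1 (hxy i), fun hyz => h.2 (htrans i (hxy i) hyz)⟩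

private lemma m2 (z : X) : pp R y z ≤ pp R x z :=
  card_mono fun i h => ⟨htrans i (hxy i) h.1, fun hzx => h.2 (htrans i hzx (hxy i))⟩

private lemma m3 (z : X) : rr R z x ≤ rr R z y :=
  card_mono fun i h => htrans i h (hxy i)

private lemma m4 (z : X) : rr R y z ≤ rr R x z :=
  card_mono fun i h => htrans i (hxy i) h

omit htrans

private lemma m5 : pp R y x = 0 := by
  have : IsEmpty {i : Fin n // R i y x ∧ ¬ R i x y} := ⟨fun ⟨i, hi⟩ => hi.2 (hxy i)⟩
  exact Nat.card_of_isEmpty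

end Mono

/-- Generic transfer of optimality along redirection lemmas. -/
private lemma transfer {S : Set X} {A : X → X → Prop} {x y : X}
    (hx : x ∈ S) (hy : y ∈ S)
    (L1 : ∀ z, A z x → A z y) (L2 : ∀ z, A y z → A x z) (L0 : ¬ A y x)
    (hopt : optimalIn S A y) : optimalIn S A x := by
  intro z hz hzx
  rcases Relation.ReflTransGen.cases_tail hzx with rfl | ⟨w, hzw, hwx⟩
  · exact Relation.ReflTransGen.refl
  · have hzy : trS S A z y := hzw.tail ⟨hwx.1, hy, L1 w hwx.2.2⟩
    have hyz : trS S A y z := hopt z hz hzy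
    rcases Relation.ReflTransGen.cases_head hyz with rfl | ⟨w', hyw', hw'z⟩
    · -- z = y : need x tr y, knowing hzx : y tr x
      rcases Relation.ReflTransGen.cases_head hzx with heq | ⟨v, hyv, hvx⟩
      · cases heq; exact Relation.ReflTransGen.refl
      · have hxv : trS S A x v := Relation.ReflTransGen.single ⟨hx, hyv.2.1, L2 v hyv.2.2⟩
        rcases Relation.ReflTransGen.cases_tail hvx with rfl | ⟨u, hvu, hux⟩
        · exact absurd hyv.2.2 L0
        · exact ((hxv.trans hvu).tail ⟨hux.1, hy, L1 u hux.2.2⟩)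
    · exact (Relation.ReflTransGen.single ⟨hx, hyw'.2.1, L2 w' hyw'.2.2⟩).trans hw'z

end Aux


open SC in
/-- if all `R_i` are transitive, `x R_i y` for all `i`, and `y` is
`tr_S(A_α)`-optimal for `A ∈ {B, R, E}`, then so is `x`. -/
theorem stmt5 {X : Type*} [Fintype X] {n : ℕ} (hn : 1 ≤ n)
    (R : Fin n → X → X → Prop) (hrefl : ∀ i, Reflexive (R i))
    (htrans : ∀ i, Transitive (R i))
    (S : Set X) (α : ℝ) (hα : 1 / 2 < α) (hα1 : α ≤ 1)
    (x y : X) (hx : x ∈ S) (hy : y ∈ S) (hxy : ∀ i, R i x y) :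
    (optimalIn S (Brel R α) y → optimalIn S (Brel R α) x) ∧
    (optimalIn S (Rrel R α) y → optimalIn S (Rrel R α) x) ∧
    (optimalIn S (Erel R α) y → optimalIn S (Erel R α) x) := by
  have hα0 : (0:ℝ) < α := by linarith
  have hm1 := m1 htrans hxy
  have hm2 := m2 htrans hxy
  have hm3 := m3 htrans hxy
  have hm4 := m4 htrans hxy
  have hm5 : pp R y x = 0 := m5 hxy
  -- cast versions
  have cm1 : ∀ z, (pp R z x : ℝ) ≤ pp R z y := fun z => Nat.cast_le.2 (hm1 z)
  have cm2 : ∀ z, (pp R y z : ℝ) ≤ pp R x z := fun z => Nat.cast_le.2 (hm2 z)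
  have cm3 : ∀ z, (rr R z x : ℝ) ≤ rr R z y := fun z => Nat.cast_le.2 (hm3 z)
  have cm4 : ∀ z, (rr R y z : ℝ) ≤ rr R x z := fun z => Nat.cast_le.2 (hm4 z)
  refine ⟨?_, ?_, ?_⟩
  · -- Brel
    refine transfer hx hy (fun z hz => ?_) (fun z hz => ?_) (fun hz => ?_)
    · obtain ⟨h1, h2⟩ := hz
      have e1 : (dd R z x : ℝ) = rr R x z + pp R z x := by rw [dd_eq2]; push_cast; ring
      have e2 : (dd R z y : ℝ) = rr R y z + pp R z y := by rw [dd_eq2]; push_cast; ring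
      have key : α * ((pp R z y : ℝ) + rr R y z) ≤ pp R z y := by
        refine num hα0 hα1 ?_ (cm1 z) (cm4 z)
        rw [e1] at h1; linarith
      have hp : (0:ℝ) < pp R z y := lt_of_lt_of_le (lt_of_lt_of_le h2 h1) (cm1 z)
      constructor
      · rw [e2]; linarith
      · rw [e2]
        have : (0:ℝ) ≤ rr R y z := Nat.cast_nonneg _
        nlinarith
    · obtain ⟨h1, h2⟩ := hz
      have e1 : (dd R y z : ℝ) = rr R z y + pp R y z := by rw [dd_eq2]; push_cast; ring
      have e2 : (dd R x z : ℝ) = rr R z x + pp R x z := by rw [dd_eq2]; push_cast; ring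
      have key : α * ((pp R x z : ℝ) + rr R z x) ≤ pp R x z := by
        refine num hα0 hα1 ?_ (cm2 z) (cm3 z)
        rw [e1] at h1; linarith
      have hp : (0:ℝ) < pp R x z := lt_of_lt_of_le (lt_of_lt_of_le h2 h1) (cm2 z)
      constructor
      · rw [e2]; linarith
      · rw [e2]
        have : (0:ℝ) ≤ rr R z x := Nat.cast_nonneg _
        nlinarith
    · obtain ⟨h1, h2⟩ := hz
      rw [hm5] at h1
      simp only [Nat.cast_zero] at h1
      linarith
  · -- Rrel
    refine transfer hx hy (fun z hz => ?_) (fun z hz => ?_) (fun hz => ?_)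
    · obtain ⟨h1, h2⟩ := hz
      exact ⟨num hα0 hα1 h1 (cm3 z) (cm4 z), lt_of_lt_of_le h2 (hm1 z)⟩
    · obtain ⟨h1, h2⟩ := hz
      exact ⟨num hα0 hα1 h1 (cm4 z) (cm3 z), lt_of_lt_of_le h2 (hm2 z)⟩
    · exact absurd hz.2 (by rw [hm5]; exact lt_irrefl 0)
  · -- Erel
    refine transfer hx hy (fun z hz => ?_) (fun z hz => ?_) (fun hz => ?_)
    · obtain ⟨h1, h2⟩ := hz
      have e1 : ((pp R z x : ℝ) + ee R z x) = rr R z x := by rw [rr_eq]; push_cast; ring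
      have e2 : ((pp R z y : ℝ) + ee R z y) = rr R z y := by rw [rr_eq]; push_cast; ring
      have d1 : (dd R z x : ℝ) = rr R z x + pp R x z := by rw [dd_eq1]; push_cast; ring
      have d2 : (dd R z y : ℝ) = rr R z y + pp R x z - pp R x z + pp R y z := by
        rw [dd_eq1]; push_cast; ring
      refine ⟨lt_of_le_of_lt (hm2 z) (lt_of_lt_of_le h1 (hm1 z)), ?_⟩
      have key : α * ((rr R z y : ℝ) + pp R y z) ≤ rr R z y := by
        refine num hα0 hα1 ?_ (cm3 z) (cm2 z)
        rw [e1, d1] at h2; linarith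
      rw [e2, d2]; linarith
    · obtain ⟨h1, h2⟩ := hz
      have e1 : ((pp R y z : ℝ) + ee R y z) = rr R y z := by rw [rr_eq]; push_cast; ring
      have e2 : ((pp R x z : ℝ) + ee R x z) = rr R x z := by rw [rr_eq]; push_cast; ring
      have d1 : (dd R y z : ℝ) = rr R y z + pp R z y := by rw [dd_eq1]; push_cast; ring
      have d2 : (dd R x z : ℝ) = rr R x z + pp R z x := by rw [dd_eq1]; push_cast; ring
      refine ⟨lt_of_le_of_lt (hm1 z) (lt_of_lt_of_le h1 (hm2 z)), ?_⟩
      have key : α * ((rr R x z : ℝ) + pp R z x) ≤ rr R x z := by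
        refine num hα0 hα1 ?_ (cm4 z) (cm1 z)
        rw [e1, d1] at h2; linarith
      rw [e2, d2]; linarith
    · exact absurd hz.1 (by rw [hm5]; exact Nat.not_lt_zero _)
end

section
/- Let X be a finite set, C a choice function on X, and A a binary relation on X. Define the (GC)-modification C^(GC) by C^(GC)(S) = C(S) ∪ {x ∈ S : x ∈ C({x,y}) for all y ∈ S}. Then C^(GC) is again a choice function, and: if C satisfies (wIm_A) then C^(GC) satisfies (wIm_A), and if C satisfies (Im_A) then C^(GC) satisfies (Im_A). -/
/-! An element of `C^(GC)(S)` either lies in `C(S)`, where the hypothesis on `C` applies directly,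
or beats every `y ∈ S` in the pair `{x, y}`. In the second case apply the hypothesis to the pair:
both conclusions only involve elements of `{x, y} ⊆ S`, so they persist in `S`. -/

namespace SC

variable {X : Type*}

/-- `C` is a choice function: it assigns to each nonempty `S` a nonempty subset of `S`. -/
def IsChoice (C : Set X → Set X) : Prop :=
  ∀ S : Set X, S.Nonempty → (C S).Nonempty ∧ C S ⊆ S

/-- Condition (wIm_A): weak immunity from `A`-arguments. -/
def wIm (C : Set X → Set X) (A : X → X → Prop) : Prop :=
  ∀ S : Set X, S.Nonempty → ∀ x ∈ C S, ∀ y ∈ S, y ≠ x → A y x →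
    ∃ z ∈ S, z ≠ y ∧ A z y

/-- Condition (Im_A): immunity from `A`-arguments. -/
def Im (C : Set X → Set X) (A : X → X → Prop) : Prop :=
  ∀ S : Set X, S.Nonempty → ∀ x ∈ C S, ∀ y ∈ S, A y x → trS S A x y

/-- The (GC)-modification `C^(GC)` of a choice function `C`:
`C^(GC)(S) = C(S) ∪ {x ∈ S : x ∈ C({x,y}) for all y ∈ S}`. -/
def Cgc (C : Set X → Set X) (S : Set X) : Set X :=
  C S ∪ {x ∈ S | ∀ y ∈ S, x ∈ C {x, y}}

variable {C : Set X → Set X} {A : X → X → Prop}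

theorem trS_mono {S T : Set X} (hST : S ⊆ T) {x y : X} (h : trS S A x y) : trS T A x y :=
  Relation.ReflTransGen.mono (fun _ _ hab => ⟨hST hab.1, hST hab.2.1, hab.2.2⟩) x y h

theorem IsChoice.cgc (hC : IsChoice C) : IsChoice (Cgc C) := fun S hS =>
  ⟨(hC S hS).1.mono Set.subset_union_left, Set.union_subset (hC S hS).2 fun _ hx => hx.1⟩

theorem wIm.cgc (hw : wIm C A) : wIm (Cgc C) A := by
  rintro S hS x (hx | ⟨hxS, hxpair⟩) y hy hyx hAyx
  · exact hw S hS x hx y hy hyx hAyx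
  · obtain ⟨z, hz, hzy, hAzy⟩ :=
      hw {x, y} (Set.insert_nonempty x {y}) x (hxpair y hy) y (Or.inr rfl) hyx hAyx
    exact ⟨z, Set.pair_subset hxS hy hz, hzy, hAzy⟩

theorem Im.cgc (him : Im C A) : Im (Cgc C) A := by
  rintro S hS x (hx | ⟨hxS, hxpair⟩) y hy hAyx
  · exact him S hS x hx y hy hAyx
  · exact trS_mono (Set.pair_subset hxS hy)
      (him {x, y} (Set.insert_nonempty x {y}) x (hxpair y hy) y (Or.inr rfl) hAyx)

end SC

open SC in
theorem stmt7_general {X : Type*} (C : Set X → Set X) (A : X → X → Prop)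
    (hC : IsChoice C) :
    IsChoice (Cgc C) ∧ (wIm C A → wIm (Cgc C) A) ∧ (Im C A → Im (Cgc C) A) :=
  ⟨hC.cgc, wIm.cgc, Im.cgc⟩

open SC in
/-- the (GC)-modification of a choice function is a choice function and
preserves (wIm_A) and (Im_A). -/
theorem stmt7 {X : Type*} [Fintype X] (C : Set X → Set X) (A : X → X → Prop)
    (hC : IsChoice C) :
    IsChoice (Cgc C) ∧ (wIm C A → wIm (Cgc C) A) ∧ (Im C A → Im (Cgc C) A) :=
  stmt7_general C A hC
end
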